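/- Let m = n = 2, 0 < τ < 1/2, λ > 1 with 1 - 2τ + 10λτ ≤ λ, and set r = 1 - 2τ + 6λτ. For the exponentially λ-equivariant 2×2 template f with δ(f,t) = 2 for 1 < t < r and δ(f,t) = 3 for r < t < λ (extended λ-equivariantly), the lower average contraction rate equals 3 - (6λτ - 2τ)/((1 - λ⁻¹)(1 - 2τ + 6λτ)); in particular δ̲(f) = 3 - Θ(τ) as τ → 0 for fixed λ. -/

import Mathlib

open Filter

/-- The contraction-rate function of the exponentially `λ`-equivariant `2×2` template:
`δ(f,t) = 2` for `1 < t < r`, `δ(f,t) = 3` for `r < t < λ`, extended so that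
`δ(f,λt) = δ(f,t)` for all `t > 0`. -/
noncomputable def deltaFun (lam r : ℝ) (t : ℝ) : ℝ :=
  if t ≤ 0 then 3
  else if t / lam ^ ⌊Real.logb lam t⌋ < r then 2 else 3

open MeasureTheory Set intervalIntegral

/-!
Since `δ(f, λt) = δ(f, t)`, the primitive `F(T) = ∫₀ᵀ δ(f,t) dt` satisfies `F(λT) = λ F(T)`, so the
average `F(T)/T` is invariant under `T ↦ λT` and its `liminf` is its minimum over one period
`[1, λ]`. There `F` is affine of slope `2` on `[1, r]` and of slope `3` on `[r, λ]`, and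
`F(1) = (3λ - r - 2)/(λ - 1)` lies in `[2, r + 2]`; hence the average decreases on `[1, r]`,
increases on `[r, λ]`, and its minimum is `F(r)/r`.
-/

section MulInvariant

variable {lam : ℝ} {g : ℝ → ℝ}

lemma comp_pow_mul_eq_of_comp_mul_eq (hg : ∀ T, g (lam * T) = g T) (n : ℕ) (T : ℝ) :
    g (lam ^ n * T) = g T := by
  induction n with
  | zero => simp
  | succ n ih => rw [pow_succ', mul_assoc, hg, ih]

lemma liminf_atTop_eq_of_comp_mul_eq (hlam : 1 < lam) (hg : ∀ T, g (lam * T) = g T)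
    {T₀ : ℝ} (hT₀ : 0 < T₀) (hmin : ∀ T ∈ Icc 1 lam, g T₀ ≤ g T) :
    liminf g atTop = g T₀ := by
  have hlow : ∀ᶠ T in atTop, g T₀ ≤ g T := by
    filter_upwards [eventually_ge_atTop 1] with T hT
    obtain ⟨n, hnT, hTn⟩ := exists_nat_pow_near hT hlam
    have hpos : 0 < lam ^ n := pow_pos (zero_lt_one.trans hlam) n
    have hmem : T / lam ^ n ∈ Icc 1 lam :=
      ⟨(one_le_div hpos).2 hnT, (div_le_iff₀ hpos).2 (by rw [mul_comm, ← pow_succ]; exact hTn.le)⟩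
    calc g T₀ ≤ g (T / lam ^ n) := hmin _ hmem
      _ = g T := by rw [← comp_pow_mul_eq_of_comp_mul_eq hg n, mul_div_cancel₀ T hpos.ne']
  have hfreq : ∃ᶠ T in atTop, g T ≤ g T₀ :=
    ((tendsto_pow_atTop_atTop_of_one_lt hlam).atTop_mul_const hT₀).frequently
      (Frequently.of_forall fun n => (comp_pow_mul_eq_of_comp_mul_eq hg n T₀).le)
  exact le_antisymm (liminf_le_of_frequently_le hfreq ⟨_, hlow⟩)
    (le_liminf_of_le (IsCoboundedUnder.of_frequently_le hfreq) hlow)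

variable {f : ℝ → ℝ}

lemma integral_zero_mul_of_comp_mul_eq (hlam : lam ≠ 0) (hf : ∀ t, f (lam * t) = f t) (T : ℝ) :
    ∫ t in 0..lam * T, f t = lam * ∫ t in 0..T, f t := by
  have h := integral_comp_mul_left (a := 0) (b := T) f hlam
  simp only [hf, mul_zero, smul_eq_mul] at h
  rw [h, mul_inv_cancel_left₀ hlam]

lemma average_comp_mul_eq_of_comp_mul_eq (hlam : lam ≠ 0) (hf : ∀ t, f (lam * t) = f t)
    (T : ℝ) :
    1 / (lam * T) * ∫ t in 0..lam * T, f t = 1 / T * ∫ t in 0..T, f t := by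
  rw [integral_zero_mul_of_comp_mul_eq hlam hf, one_div_mul_eq_div, one_div_mul_eq_div,
    mul_div_mul_left _ _ hlam]

lemma integral_one_eq_sub_one_mul_of_comp_mul_eq (hlam : lam ≠ 0) (hf : ∀ t, f (lam * t) = f t)
    (h01 : IntervalIntegrable f volume 0 1) (h1lam : IntervalIntegrable f volume 1 lam) :
    ∫ t in 1..lam, f t = (lam - 1) * ∫ t in 0..1, f t := by
  have h := integral_add_adjacent_intervals h01 h1lam
  rw [← mul_one lam, integral_zero_mul_of_comp_mul_eq hlam hf, mul_one] at h
  linear_combination h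

end MulInvariant

section Template

variable {lam r : ℝ}

lemma deltaFun_mul_left (hlam : 1 < lam) (t : ℝ) :
    deltaFun lam r (lam * t) = deltaFun lam r t := by
  have hlam0 : 0 < lam := zero_lt_one.trans hlam
  rcases le_or_gt t 0 with ht | ht
  · simp [deltaFun, ht, mul_nonpos_of_nonneg_of_nonpos hlam0.le ht]
  have hfloor : ⌊Real.logb lam (lam * t)⌋ = ⌊Real.logb lam t⌋ + 1 := by
    rw [Real.logb_mul hlam0.ne' ht.ne', Real.logb_self_eq_one hlam, add_comm, Int.floor_add_one]
  have hdiv : lam * t / lam ^ (⌊Real.logb lam t⌋ + 1) = t / lam ^ ⌊Real.logb lam t⌋ := by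
    rw [zpow_add_one₀ hlam0.ne', mul_comm _ lam, mul_div_mul_left _ _ hlam0.ne']
  simp only [deltaFun, not_le.2 ht, not_le.2 (mul_pos hlam0 ht), if_false, hfloor, hdiv]

lemma deltaFun_of_mem_Ico (hlam : 1 < lam) {t : ℝ} (ht : t ∈ Ico 1 lam) :
    deltaFun lam r t = if t < r then 2 else 3 := by
  have hfloor : ⌊Real.logb lam t⌋ = 0 := by
    rw [Int.floor_eq_zero_iff, ← Real.logb_self_eq_one hlam]
    exact ⟨Real.logb_nonneg hlam ht.1, Real.logb_lt_logb hlam (zero_lt_one.trans_le ht.1) ht.2⟩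
  simp [deltaFun, not_le.2 (zero_lt_one.trans_le ht.1), hfloor]

lemma measurable_deltaFun : Measurable (deltaFun lam r) := by
  refine Measurable.ite (measurableSet_le measurable_id measurable_const) measurable_const
    (Measurable.ite (measurableSet_lt (measurable_id.div ?_) measurable_const) measurable_const
      measurable_const)
  exact (measurable_of_countable (fun n : ℤ => lam ^ n)).comp
    (Real.measurable_log.div_const _).floor

lemma intervalIntegrable_deltaFun (a b : ℝ) : IntervalIntegrable (deltaFun lam r) volume a b := by
  refine IntervalIntegrable.mono_fun' (g := fun _ => 3) intervalIntegrable_const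
    measurable_deltaFun.aestronglyMeasurable (ae_of_all _ fun t => ?_)
  simp only [deltaFun]
  split_ifs <;> norm_num

variable (hlam : 1 < lam)
include hlam

lemma integral_deltaFun_eq_two_mul (hrlam : r ≤ lam) {T : ℝ} (hT1 : 1 ≤ T) (hTr : T ≤ r) :
    ∫ t in 1..T, deltaFun lam r t = 2 * (T - 1) := by
  rw [integral_congr_Ioo_of_le hT1 (g := fun _ => 2) fun t ht => by
    simp [deltaFun_of_mem_Ico hlam ⟨ht.1.le, ht.2.trans_le (hTr.trans hrlam)⟩, ht.2.trans_le hTr]]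
  simp [mul_comm]

lemma integral_deltaFun_eq_three_mul (hr1 : 1 ≤ r) {T : ℝ} (hrT : r ≤ T) (hTlam : T ≤ lam) :
    ∫ t in r..T, deltaFun lam r t = 3 * (T - r) := by
  rw [integral_congr_Ioo_of_le hrT (g := fun _ => 3) fun t ht => by
    simp [deltaFun_of_mem_Ico hlam ⟨hr1.trans ht.1.le, ht.2.trans_le hTlam⟩, ht.1.le]]
  simp [mul_comm]

lemma sub_one_mul_integral_zero_one_deltaFun (hr1 : 1 ≤ r) (hrlam : r ≤ lam) :
    (lam - 1) * ∫ t in 0..1, deltaFun lam r t = 3 * lam - r - 2 := by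
  rw [← integral_one_eq_sub_one_mul_of_comp_mul_eq (zero_lt_one.trans hlam).ne'
      (deltaFun_mul_left hlam) (intervalIntegrable_deltaFun 0 1)
      (intervalIntegrable_deltaFun 1 lam),
    ← integral_add_adjacent_intervals (intervalIntegrable_deltaFun 1 r)
      (intervalIntegrable_deltaFun r lam),
    integral_deltaFun_eq_two_mul hlam hrlam hr1 le_rfl,
    integral_deltaFun_eq_three_mul hlam hr1 hrlam le_rfl]
  ring

lemma integral_zero_deltaFun_eq_add_two_mul (hrlam : r ≤ lam) {T : ℝ} (hT1 : 1 ≤ T) (hTr : T ≤ r) :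
    ∫ t in 0..T, deltaFun lam r t = (∫ t in 0..1, deltaFun lam r t) + 2 * (T - 1) := by
  rw [← integral_add_adjacent_intervals (intervalIntegrable_deltaFun 0 1)
      (intervalIntegrable_deltaFun 1 T), integral_deltaFun_eq_two_mul hlam hrlam hT1 hTr]

lemma average_deltaFun_self_le (hr1 : 1 ≤ r) (hrlam : r ≤ lam) {T : ℝ} (hT : T ∈ Icc 1 lam) :
    1 / r * ∫ t in 0..r, deltaFun lam r t ≤ 1 / T * ∫ t in 0..T, deltaFun lam r t := by
  have hF := sub_one_mul_integral_zero_one_deltaFun hlam hr1 hrlam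
  have hFr := integral_zero_deltaFun_eq_add_two_mul hlam hrlam hr1 le_rfl
  set F := ∫ t in 0..1, deltaFun lam r t
  have hF2 : 2 ≤ F := by nlinarith
  have hFr3 : F ≤ r + 2 := by nlinarith
  rw [one_div_mul_eq_div, one_div_mul_eq_div, div_le_div_iff₀ (by linarith) (by linarith [hT.1]),
    hFr]
  rcases le_total T r with hTr | hrT
  · rw [integral_zero_deltaFun_eq_add_two_mul hlam hrlam hT.1 hTr]
    nlinarith
  · rw [← integral_add_adjacent_intervals (intervalIntegrable_deltaFun 0 r)
      (intervalIntegrable_deltaFun r T), hFr, integral_deltaFun_eq_three_mul hlam hr1 hrT hT.2]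
    nlinarith

lemma average_deltaFun_self (hr1 : 1 ≤ r) (hrlam : r ≤ lam) :
    1 / r * ∫ t in 0..r, deltaFun lam r t = 3 - (r - 1) / ((1 - lam⁻¹) * r) := by
  have hF := sub_one_mul_integral_zero_one_deltaFun hlam hr1 hrlam
  rw [integral_zero_deltaFun_eq_add_two_mul hlam hrlam hr1 le_rfl]
  have hlam1 : lam - 1 ≠ 0 := sub_ne_zero.2 hlam.ne'
  have hr0 : r ≠ 0 := (zero_lt_one.trans_le hr1).ne'
  field_simp
  linear_combination hF

end Template

theorem twoByTwo_lower_contraction_rate_general (τ lam : ℝ)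
    (hτ0 : 0 < τ) (hlam : 1 < lam)
    (hcompat : 1 - 2 * τ + 10 * lam * τ ≤ lam) :
    liminf (fun T : ℝ =>
        (1 / T) * ∫ t in (0:ℝ)..T, deltaFun lam (1 - 2 * τ + 6 * lam * τ) t) atTop =
      3 - (6 * lam * τ - 2 * τ) / ((1 - lam⁻¹) * (1 - 2 * τ + 6 * lam * τ)) := by
  have hr1 : 1 ≤ 1 - 2 * τ + 6 * lam * τ := by nlinarith
  have hrlam : 1 - 2 * τ + 6 * lam * τ ≤ lam := by nlinarith
  rw [liminf_atTop_eq_of_comp_mul_eq hlam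
      (average_comp_mul_eq_of_comp_mul_eq (zero_lt_one.trans hlam).ne' (deltaFun_mul_left hlam))
      (zero_lt_one.trans_le hr1) fun T hT => average_deltaFun_self_le hlam hr1 hrlam hT,
    average_deltaFun_self hlam hr1 hrlam]
  ring

/-- For `m = n = 2`, `0 < τ < 1/2`, `λ > 1` with `1 - 2τ + 10λτ ≤ λ`, and
`r = 1 - 2τ + 6λτ`, the lower average contraction rate
`δ̲(f) = liminf_{T→∞} (1/T)∫₀^T δ(f,t) dt` of the exponentially `λ`-equivariant `2×2`
template with `δ(f,·) = 2` on `(1,r)` and `= 3` on `(r,λ)` equals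
`3 - (6λτ - 2τ)/((1 - λ⁻¹)(1 - 2τ + 6λτ))`; in particular `δ̲(f) = 3 - Θ(τ)`
as `τ → 0` for fixed `λ`. -/
theorem twoByTwo_lower_contraction_rate (τ lam : ℝ)
    (hτ0 : 0 < τ) (hτ1 : τ < 1 / 2) (hlam : 1 < lam)
    (hcompat : 1 - 2 * τ + 10 * lam * τ ≤ lam) :
    liminf (fun T : ℝ =>
        (1 / T) * ∫ t in (0:ℝ)..T, deltaFun lam (1 - 2 * τ + 6 * lam * τ) t) atTop =
      3 - (6 * lam * τ - 2 * τ) / ((1 - lam⁻¹) * (1 - 2 * τ + 6 * lam * τ)) :=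
  twoByTwo_lower_contraction_rate_general τ lam hτ0 hlam hcompat
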